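/- Let T = (V,E) be a finite complete rooted binary tree, p a prime, X ⊆ V an arbitrary set, and ρ : X → Z/pZ. Then ρ is consistent (i.e. there exists a consistent function ρ' : cl(X) → Z/pZ extending ρ) if and only if for every x ∈ X and every F ⊆ X such that F minimally encloses x, one has ρ(x) = Σ_{y ∈ F} ρ(y) (sum in Z/pZ). -/

import Mathlib

/-!
Vertices of the complete rooted binary tree of height `n` are modelled as
binary strings (lists of booleans) of length at most `n`: the root is the empty
list, and the two children of a vertex `x` (when `x.length < n`) are
`x ++ [true]` and `x ++ [false]`.  Leaves are the strings of length exactly `n`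
and the height of a vertex is its distance to the leaves below it.
-/

/-- The ambient type of tree vertices: binary strings. -/
abbrev V : Type := List Bool

/-- The vertex set of the complete binary tree of height `n`. -/
def treeSet (n : ℕ) : Set V := {l : V | l.length ≤ n}

/-- The height of a vertex: its distance to the leaves below it. -/
def hgt (n : ℕ) (v : V) : ℕ := n - v.length

/-- A set `X` is closed if, whenever two elements of a related triple
(a parent together with its two children) belong to `X`, so does the third. -/
def TripleClosed (n : ℕ) (X : Set V) : Prop :=
  ∀ x : V, x.length < n →
    ((x ∈ X → x ++ [true] ∈ X → x ++ [false] ∈ X) ∧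
     (x ∈ X → x ++ [false] ∈ X → x ++ [true] ∈ X) ∧
     (x ++ [true] ∈ X → x ++ [false] ∈ X → x ∈ X))

/-- The closure of `X`: the smallest closed subset of the tree containing `X`. -/
def cl (n : ℕ) (X : Set V) : Set V :=
  ⋂₀ {Y : Set V | X ⊆ Y ∧ Y ⊆ treeSet n ∧ TripleClosed n Y}

/-- `min-h(X)`: the minimum height of an element of `X`. -/
noncomputable def minh (n : ℕ) (X : Set V) : ℕ := sInf (hgt n '' X)

/-- `z` lies on the unique undirected path between `x` and `y`:
`z` is an ancestor of `x` or of `y`, and the longest common prefix of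
`x` and `y` is an ancestor of `z`. -/
def OnPath (x y z : V) : Prop :=
  (z <+: x ∨ z <+: y) ∧ ∀ w : V, w <+: x → w <+: y → w <+: z

/-- `X` is connected: it contains the undirected path between any two of its elements. -/
def Conn (X : Set V) : Prop :=
  ∀ x ∈ X, ∀ y ∈ X, ∀ z : V, OnPath x y z → z ∈ X

/-- `F` encloses `v`: every path from `v` down to a leaf contains an element of `F`. -/
def Encloses (n : ℕ) (F : Set V) (v : V) : Prop :=
  ∀ l : V, l.length = n → v <+: l → ∃ z ∈ F, v <+: z ∧ z <+: l

/-- `F` minimally encloses `v`. -/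
def MinEncloses (n : ℕ) (F : Set V) (v : V) : Prop :=
  Encloses n F v ∧ ∀ F' : Set V, F' ⊂ F → ¬ Encloses n F' v

/-- `r` is the head of `X`: an element of `X` of maximum height. -/
def IsHead (n : ℕ) (X : Set V) (r : V) : Prop :=
  r ∈ X ∧ ∀ y ∈ X, hgt n y ≤ hgt n r

/-- `Fr` is the frontier of the closed connected set `S` with head `x`:
`Fr ⊆ S` minimally encloses `x` and `S` consists exactly of the vertices lying
on the directed path from `x` to some element of `Fr`. -/
def IsFrontier (n : ℕ) (S Fr : Set V) (x : V) : Prop :=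
  Fr ⊆ S ∧ MinEncloses n Fr x ∧ S = {z : V | ∃ f ∈ Fr, x <+: z ∧ z <+: f}

/-- `ρ` is consistent on a closed set `X`: `ρ(x) = ρ(y) + ρ(z)` whenever
`x, y, z ∈ X` and `y, z` are the two children of `x`. -/
def ConsistentOn (p : ℕ) (X : Set V) (ρ : V → ZMod p) : Prop :=
  ∀ x : V, x ∈ X → x ++ [true] ∈ X → x ++ [false] ∈ X →
    ρ x = ρ (x ++ [true]) + ρ (x ++ [false])

/-- `ρ` (viewed as a function with domain `X`) is consistent: it has a
consistent extension to the closure of `X`. -/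
def Consistent (n p : ℕ) (X : Set V) (ρ : V → ZMod p) : Prop :=
  ∃ ρ' : V → ZMod p, ConsistentOn p (cl n X) ρ' ∧ ∀ x ∈ X, ρ' x = ρ x

/-! A minimal enclosure `F` of a vertex `v ∉ F` splits into minimal enclosures of the two
children of `v`, and conversely minimal enclosures of the two children glue to one of `v`.
Induction from the leaves upwards then shows that a consistent function on a closed set takes
at `v` the sum of its values over any minimal enclosure of `v`, which gives necessity.

For sufficiency, the same induction shows that under the sum condition all minimal enclosures
of `v` inside `X` carry the same sum. Subtree sums of a labelling of the leaves are consistent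
everywhere, so it suffices to label the leaves such that these sums extend `ρ`. This is done
from the root downwards: the target value of a vertex is split between its two children, and
a child without a minimal enclosure inside `X` absorbs whatever the other one does not take. -/

lemma treeSet_finite (n : ℕ) : (treeSet n).Finite := List.finite_length_le Bool n

lemma exists_leaf_of_length_le (n : ℕ) {v : V} (hv : v.length ≤ n) :
    ∃ l : V, l.length = n ∧ v <+: l := by
  refine ⟨v ++ List.replicate (n - v.length) true, ?_, List.prefix_append _ _⟩
  simp only [List.length_append, List.length_replicate]
  omega

lemma exists_append_singleton_prefix {v f : V} (h : v <+: f) (hne : f ≠ v) :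
    ∃ b : Bool, v ++ [b] <+: f := by
  obtain ⟨r, rfl⟩ := h
  cases r with
  | nil => simp at hne
  | cons b r => exact ⟨b, r, by simp⟩

lemma eq_of_append_singleton_prefix {v l : V} {b b' : Bool} (h : v ++ [b] <+: l)
    (h' : v ++ [b'] <+: l) : b = b' := by
  simpa using (List.prefix_of_prefix_length_le h h' (by simp)).eq_of_length (by simp)

lemma append_singleton_prefix_of_prefix {v z l : V} {b : Bool} (hvz : v <+: z) (hne : z ≠ v)
    (hzl : z <+: l) (hbl : v ++ [b] <+: l) : v ++ [b] <+: z := by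
  obtain ⟨b', hb'⟩ := exists_append_singleton_prefix hvz hne
  rwa [eq_of_append_singleton_prefix hbl (hb'.trans hzl)]

lemma disjoint_of_forall_prefix {v : V} {A B : Set V} (hA : ∀ f ∈ A, v ++ [true] <+: f)
    (hB : ∀ f ∈ B, v ++ [false] <+: f) : Disjoint A B :=
  Set.disjoint_left.2 fun f hfA hfB =>
    Bool.noConfusion (eq_of_append_singleton_prefix (hA f hfA) (hB f hfB))

theorem induction_from_leaves {n : ℕ} {P : V → Prop}
    (step : ∀ v : V, v.length ≤ n → (v.length < n → P (v ++ [true]) ∧ P (v ++ [false])) → P v) :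
    ∀ v : V, v.length ≤ n → P v := by
  suffices ∀ k : ℕ, ∀ v : V, n - v.length = k → v.length ≤ n → P v from
    fun v => this _ v rfl
  intro k
  induction k with
  | zero => exact fun v hk hv => step v hv fun hlt => by omega
  | succ k ih =>
    refine fun v hk hv => step v hv fun hlt => ⟨ih _ ?_ ?_, ih _ ?_ ?_⟩ <;>
      simp only [List.length_append, List.length_singleton] <;> omega

section Enclosures

variable {n : ℕ} {F G₁ G₀ : Set V} {v : V}

def below (F : Set V) (w : V) : Set V := {f ∈ F | w <+: f}

lemma below_subset (F : Set V) (w : V) : below F w ⊆ F := Set.sep_subset _ _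

lemma Encloses.union_of_children {G G' : Set V} {b : Bool} (hv : v.length < n)
    (hG : Encloses n G (v ++ [b])) (hG' : Encloses n G' (v ++ [!b])) :
    Encloses n (G ∪ G') v := by
  intro l hl hvl
  obtain ⟨b', hb'⟩ := exists_append_singleton_prefix hvl (by rintro rfl; omega)
  rcases Bool.eq_or_eq_not b' b with rfl | rfl
  · obtain ⟨z, hz, hbz, hzl⟩ := hG l hl hb'
    exact ⟨z, Or.inl hz, (List.prefix_append _ _).trans hbz, hzl⟩
  · obtain ⟨z, hz, hbz, hzl⟩ := hG' l hl (by simpa using hb')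
    exact ⟨z, Or.inr hz, (List.prefix_append _ _).trans hbz, hzl⟩

lemma Encloses.below_child (h : Encloses n F v) (hvF : v ∉ F) (b : Bool) :
    Encloses n (below F (v ++ [b])) (v ++ [b]) := by
  intro l hl hbl
  obtain ⟨z, hz, hvz, hzl⟩ := h l hl ((List.prefix_append v [b]).trans hbl)
  have hbz := append_singleton_prefix_of_prefix hvz (by rintro rfl; exact hvF hz) hzl hbl
  exact ⟨z, ⟨hz, hbz⟩, hbz, hzl⟩

lemma MinEncloses.of_forall_subset (h : Encloses n F v)
    (hmin : ∀ F' ⊆ F, Encloses n F' v → F ⊆ F') : MinEncloses n F v :=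
  ⟨h, fun F' hF' hF'v => hF'.2 (hmin F' hF'.1 hF'v)⟩

lemma MinEncloses.subset_of_encloses {F' : Set V} (h : MinEncloses n F v) (hF' : F' ⊆ F)
    (hF'v : Encloses n F' v) : F ⊆ F' :=
  by_contra fun hc => h.2 F' ⟨hF', hc⟩ hF'v

lemma MinEncloses.subset (h : MinEncloses n F v) : F ⊆ {f | v <+: f ∧ f.length ≤ n} := by
  intro f hf
  by_contra hbad
  refine (h.subset_of_encloses Set.sdiff_subset ?_ hf).2 rfl
  intro l hl hvl
  obtain ⟨z, hz, hvz, hzl⟩ := h.1 l hl hvl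
  refine ⟨z, ⟨hz, ?_⟩, hvz, hzl⟩
  rintro rfl
  exact hbad ⟨hvz, hl ▸ hzl.length_le⟩

lemma MinEncloses.finite (h : MinEncloses n F v) : F.Finite :=
  (treeSet_finite n).subset fun _ hf => (h.subset hf).2

lemma MinEncloses.eq_singleton_of_mem (h : MinEncloses n F v) (hv : v ∈ F) : F = {v} :=
  (h.subset_of_encloses (Set.singleton_subset_iff.2 hv)
    fun _ _ hvl => ⟨v, rfl, List.prefix_refl v, hvl⟩).antisymm
    (Set.singleton_subset_iff.2 hv)

lemma minEncloses_singleton (hv : v.length ≤ n) : MinEncloses n {v} v := by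
  refine .of_forall_subset (fun _ _ hvl => ⟨v, rfl, List.prefix_refl v, hvl⟩) fun F' hF' hF'v => ?_
  obtain ⟨l, hl, hvl⟩ := exists_leaf_of_length_le n hv
  obtain ⟨z, hz, -⟩ := hF'v l hl hvl
  rwa [Set.singleton_subset_iff, ← Set.eq_of_mem_singleton (hF' hz)]

lemma MinEncloses.length_lt (h : MinEncloses n F v) (hv : v.length ≤ n) (hvF : v ∉ F) :
    v.length < n := by
  refine hv.lt_of_ne fun hlen => hvF ?_
  obtain ⟨z, hz, hvz, hzv⟩ := h.1 v hlen (List.prefix_refl v)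
  rwa [hvz.eq_of_length_le hzv.length_le]

lemma MinEncloses.below_child (h : MinEncloses n F v) (hv : v.length < n) (hvF : v ∉ F)
    (b : Bool) : MinEncloses n (below F (v ++ [b])) (v ++ [b]) := by
  refine .of_forall_subset (h.1.below_child hvF b) fun F' hF' hF'b => ?_
  have hcover : F ⊆ F' ∪ below F (v ++ [!b]) :=
    h.subset_of_encloses (Set.union_subset (hF'.trans (below_subset _ _)) (below_subset _ _))
      (hF'b.union_of_children hv (h.1.below_child hvF !b))
  intro f hf
  refine (hcover hf.1).resolve_right fun hf' => ?_
  simpa using eq_of_append_singleton_prefix hf.2 hf'.2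

lemma MinEncloses.union (hv : v.length < n) (h₁ : MinEncloses n G₁ (v ++ [true]))
    (h₀ : MinEncloses n G₀ (v ++ [false])) : MinEncloses n (G₁ ∪ G₀) v := by
  refine .of_forall_subset (h₁.1.union_of_children hv h₀.1) fun F' hF' hF'v => ?_
  have hvF' : v ∉ F' := fun hvF' => by
    rcases hF' hvF' with h | h
    · simpa using (h₁.subset h).1.length_le
    · simpa using (h₀.subset h).1.length_le
  -- by minimality, each `Gᵢ` lies in the part of `F'` below the `i`-th child
  have key : ∀ {b : Bool} {G G' : Set V}, MinEncloses n G (v ++ [b]) →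
      MinEncloses n G' (v ++ [!b]) → F' ⊆ G ∪ G' → G ⊆ F' := by
    intro b G G' hG hG' hF'G
    refine (hG.subset_of_encloses (fun f hf => ?_) (hF'v.below_child hvF' b)).trans
      (below_subset _ _)
    refine (hF'G hf.1).resolve_right fun hfG' => ?_
    simpa using eq_of_append_singleton_prefix hf.2 (hG'.subset hfG').1
  exact Set.union_subset (key h₁ h₀ hF')
    (key (b := false) h₀ h₁ (hF'.trans (Set.union_comm _ _).subset))

variable {M : Type*} [AddCommMonoid M]

lemma MinEncloses.finsum_union (g : V → M) (h₁ : MinEncloses n G₁ (v ++ [true]))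
    (h₀ : MinEncloses n G₀ (v ++ [false])) :
    ∑ᶠ f ∈ G₁ ∪ G₀, g f = ∑ᶠ f ∈ G₁, g f + ∑ᶠ f ∈ G₀, g f :=
  finsum_mem_union (disjoint_of_forall_prefix (fun _ hf => (h₁.subset hf).1)
    fun _ hf => (h₀.subset hf).1) h₁.finite h₀.finite

lemma MinEncloses.eq_union_below (h : MinEncloses n F v) (hvF : v ∉ F) :
    F = below F (v ++ [true]) ∪ below F (v ++ [false]) := by
  refine (Set.union_subset (below_subset _ _) (below_subset _ _)).antisymm' fun f hf => ?_
  obtain ⟨b, hb⟩ := exists_append_singleton_prefix (h.subset hf).1 (by rintro rfl; exact hvF hf)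
  cases b
  · exact Or.inr ⟨hf, hb⟩
  · exact Or.inl ⟨hf, hb⟩

lemma MinEncloses.finsum_eq_add (g : V → M) (h : MinEncloses n F v) (hv : v.length < n)
    (hvF : v ∉ F) : ∑ᶠ f ∈ F, g f =
      ∑ᶠ f ∈ below F (v ++ [true]), g f + ∑ᶠ f ∈ below F (v ++ [false]), g f := by
  rw [← MinEncloses.finsum_union g (h.below_child hv hvF true) (h.below_child hv hvF false),
    ← h.eq_union_below hvF]

end Enclosures

section Closure

lemma subset_cl (n : ℕ) (X : Set V) : X ⊆ cl n X :=
  fun _ hx => Set.mem_sInter.2 fun _ hY => hY.1 hx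

lemma tripleClosed_treeSet (n : ℕ) : TripleClosed n (treeSet n) := by
  intro x hx
  refine ⟨fun _ _ => ?_, fun _ _ => ?_, fun _ _ => ?_⟩ <;>
    simp only [treeSet, Set.mem_ofPred_eq, List.length_append, List.length_singleton] <;> omega

lemma cl_subset_treeSet {n : ℕ} {X : Set V} (hX : X ⊆ treeSet n) : cl n X ⊆ treeSet n :=
  fun _ hx => hx (treeSet n) ⟨hX, le_rfl, tripleClosed_treeSet n⟩

lemma tripleClosed_cl (n : ℕ) (X : Set V) : TripleClosed n (cl n X) := fun x hx =>
  ⟨fun h₁ h₂ Y hY => (hY.2.2 x hx).1 (h₁ Y hY) (h₂ Y hY),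
    fun h₁ h₂ Y hY => (hY.2.2 x hx).2.1 (h₁ Y hY) (h₂ Y hY),
    fun h₁ h₂ Y hY => (hY.2.2 x hx).2.2 (h₁ Y hY) (h₂ Y hY)⟩

variable {n p : ℕ} {Y : Set V}

lemma TripleClosed.mem_of_minEncloses (hY : TripleClosed n Y) :
    ∀ v : V, v.length ≤ n → ∀ F ⊆ Y, MinEncloses n F v → v ∈ Y := by
  refine induction_from_leaves fun v hv ih F hFY hF => ?_
  by_cases hvF : v ∈ F
  · exact hFY hvF
  have hlt := hF.length_lt hv hvF
  exact (hY v hlt).2.2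
    ((ih hlt).1 _ ((below_subset _ _).trans hFY) (hF.below_child hlt hvF true))
    ((ih hlt).2 _ ((below_subset _ _).trans hFY) (hF.below_child hlt hvF false))

lemma ConsistentOn.eq_finsum_of_minEncloses {σ : V → ZMod p} (hσ : ConsistentOn p Y σ)
    (hY : TripleClosed n Y) :
    ∀ v : V, v.length ≤ n → ∀ F ⊆ Y, MinEncloses n F v → σ v = ∑ᶠ f ∈ F, σ f := by
  refine induction_from_leaves fun v hv ih F hFY hF => ?_
  by_cases hvF : v ∈ F
  · rw [hF.eq_singleton_of_mem hvF, finsum_mem_singleton]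
  have hlt := hF.length_lt hv hvF
  have hchild : ∀ b : Bool, (v ++ [b]).length ≤ n := fun b => by simpa using hlt
  have h₁ := hF.below_child hlt hvF true
  have h₀ := hF.below_child hlt hvF false
  have hF₁ := (below_subset F (v ++ [true])).trans hFY
  have hF₀ := (below_subset F (v ++ [false])).trans hFY
  rw [hσ v (hY.mem_of_minEncloses v hv F hFY hF) (hY.mem_of_minEncloses _ (hchild true) _ hF₁ h₁)
    (hY.mem_of_minEncloses _ (hchild false) _ hF₀ h₀), (ih hlt).1 _ hF₁ h₁, (ih hlt).2 _ hF₀ h₀,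
    hF.finsum_eq_add σ hlt hvF]

end Closure

section EnclosureSums

variable {n : ℕ} {X : Set V} {M : Type*}

def EnclosureSumCondition [AddCommMonoid M] (n : ℕ) (X : Set V) (ρ : V → M) : Prop :=
  ∀ x ∈ X, ∀ F : Set V, F ⊆ X → MinEncloses n F x → ρ x = ∑ᶠ y ∈ F, ρ y

lemma finsum_eq_finsum_of_minEncloses [AddCommMonoid M] {ρ : V → M}
    (hρ : EnclosureSumCondition n X ρ) :
    ∀ v : V, v.length ≤ n → ∀ F₁ ⊆ X, ∀ F₂ ⊆ X, MinEncloses n F₁ v → MinEncloses n F₂ v →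
      ∑ᶠ f ∈ F₁, ρ f = ∑ᶠ f ∈ F₂, ρ f := by
  refine induction_from_leaves fun v hv ih F₁ hF₁X F₂ hF₂X hF₁ hF₂ => ?_
  by_cases hv₁ : v ∈ F₁
  · rw [hF₁.eq_singleton_of_mem hv₁, finsum_mem_singleton]
    exact hρ v (hF₁X hv₁) F₂ hF₂X hF₂
  by_cases hv₂ : v ∈ F₂
  · rw [hF₂.eq_singleton_of_mem hv₂, finsum_mem_singleton]
    exact (hρ v (hF₂X hv₂) F₁ hF₁X hF₁).symm
  have hlt := hF₁.length_lt hv hv₁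
  rw [hF₁.finsum_eq_add ρ hlt hv₁, hF₂.finsum_eq_add ρ hlt hv₂,
    (ih hlt).1 _ ((below_subset _ _).trans hF₁X) _ ((below_subset _ _).trans hF₂X)
      (hF₁.below_child hlt hv₁ true) (hF₂.below_child hlt hv₂ true),
    (ih hlt).2 _ ((below_subset _ _).trans hF₁X) _ ((below_subset _ _).trans hF₂X)
      (hF₁.below_child hlt hv₁ false) (hF₂.below_child hlt hv₂ false)]

def IsEnclosureSum [AddCommMonoid M] (n : ℕ) (X : Set V) (ρ : V → M) (v : V) (c : M) : Prop :=
  ∀ F ⊆ X, MinEncloses n F v → ∑ᶠ f ∈ F, ρ f = c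

lemma exists_isEnclosureSum [AddCommMonoid M] {ρ : V → M}
    (hρ : EnclosureSumCondition n X ρ) {v : V} (hv : v.length ≤ n) :
    ∃ c, IsEnclosureSum n X ρ v c := by
  by_cases h : ∃ F₀ ⊆ X, MinEncloses n F₀ v
  · obtain ⟨F₀, hF₀X, hF₀⟩ := h
    exact ⟨_, fun F hFX hF => finsum_eq_finsum_of_minEncloses hρ v hv F hFX F₀ hF₀X hF hF₀⟩
  · exact ⟨0, fun F hFX hF => (h ⟨F, hFX, hF⟩).elim⟩

lemma IsEnclosureSum.exists_add_children [AddCommGroup M] {ρ : V → M}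
    (hρ : EnclosureSumCondition n X ρ) {v : V} {c : M} (hc : IsEnclosureSum n X ρ v c)
    (hv : v.length < n) :
    ∃ c₁ c₀, c₁ + c₀ = c ∧
      IsEnclosureSum n X ρ (v ++ [true]) c₁ ∧ IsEnclosureSum n X ρ (v ++ [false]) c₀ := by
  obtain ⟨c₁, hc₁⟩ := exists_isEnclosureSum hρ (v := v ++ [true]) (by simpa using hv)
  obtain ⟨c₀, hc₀⟩ := exists_isEnclosureSum hρ (v := v ++ [false]) (by simpa using hv)
  by_cases h : ∃ F₁ ⊆ X, MinEncloses n F₁ (v ++ [true])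
  · obtain ⟨F₁, hF₁X, hF₁⟩ := h
    refine ⟨c₁, c - c₁, add_sub_cancel _ _, hc₁, fun F₀ hF₀X hF₀ => ?_⟩
    rw [← hc _ (Set.union_subset hF₁X hF₀X) (hF₁.union hv hF₀), hF₁.finsum_union ρ hF₀,
      hc₁ F₁ hF₁X hF₁, add_sub_cancel_left]
  · exact ⟨c - c₀, c₀, sub_add_cancel _ _, fun F hFX hF => (h ⟨F, hFX, hF⟩).elim, hc₀⟩

end EnclosureSums

section LeafSums

variable {n : ℕ} {M : Type*} [AddCommMonoid M] {v : V}

def leavesBelow (n : ℕ) (v : V) : Set V := {l | l.length = n ∧ v <+: l}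

noncomputable def leafSum (n : ℕ) (a : V → M) (v : V) : M := ∑ᶠ l ∈ leavesBelow n v, a l

lemma leavesBelow_finite (n : ℕ) (v : V) : (leavesBelow n v).Finite :=
  (treeSet_finite n).subset fun _ hl => hl.1.le

lemma leavesBelow_of_length_eq (hv : v.length = n) : leavesBelow n v = {v} := by
  ext l
  refine ⟨fun hl => (hl.2.eq_of_length (hv.trans hl.1.symm)).symm, ?_⟩
  rintro rfl
  exact ⟨hv, List.prefix_refl l⟩

lemma leavesBelow_eq_union (hv : v.length < n) :
    leavesBelow n v = leavesBelow n (v ++ [true]) ∪ leavesBelow n (v ++ [false]) := by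
  refine Set.Subset.antisymm (fun l hl => ?_) (Set.union_subset ?_ ?_)
  · obtain ⟨b, hb⟩ := exists_append_singleton_prefix hl.2 (by rintro rfl; exact hv.ne hl.1)
    cases b
    · exact Or.inr ⟨hl.1, hb⟩
    · exact Or.inl ⟨hl.1, hb⟩
  all_goals exact fun l hl => ⟨hl.1, (List.prefix_append _ _).trans hl.2⟩

lemma leafSum_of_length_eq (a : V → M) (hv : v.length = n) : leafSum n a v = a v := by
  rw [leafSum, leavesBelow_of_length_eq hv, finsum_mem_singleton]

lemma leafSum_eq_add (a : V → M) (hv : v.length < n) :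
    leafSum n a v = leafSum n a (v ++ [true]) + leafSum n a (v ++ [false]) := by
  rw [leafSum, leavesBelow_eq_union hv, finsum_mem_union _ (leavesBelow_finite _ _)
    (leavesBelow_finite _ _)]
  · rfl
  · exact disjoint_of_forall_prefix (fun _ hl => hl.2) fun _ hl => hl.2

lemma leafSum_congr {a a' : V → M} (h : ∀ l ∈ leavesBelow n v, a l = a' l) :
    leafSum n a v = leafSum n a' v :=
  finsum_mem_congr rfl h

lemma consistentOn_leafSum {p : ℕ} {Y : Set V} (hY : Y ⊆ treeSet n) (a : V → ZMod p) :
    ConsistentOn p Y (leafSum n a) := fun x _ hx₁ _ =>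
  leafSum_eq_add a <| by
    have h := hY hx₁
    simp only [treeSet, Set.mem_ofPred_eq, List.length_append, List.length_singleton] at h
    omega

end LeafSums

lemma exists_leafSum_eq {n : ℕ} {X : Set V} {M : Type*} [AddCommGroup M] {ρ : V → M}
    (hX : X ⊆ treeSet n) (hρ : EnclosureSumCondition n X ρ) :
    ∀ v : V, v.length ≤ n → ∀ c, IsEnclosureSum n X ρ v c →
      ∃ a : V → M, leafSum n a v = c ∧ ∀ x ∈ X, v <+: x → leafSum n a x = ρ x := by
  refine induction_from_leaves fun v hv ih c hc => ?_
  have hρv : v ∈ X → ρ v = c := fun hvX => by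
    simpa using hc {v} (Set.singleton_subset_iff.2 hvX) (minEncloses_singleton hv)
  rcases hv.lt_or_eq with hlt | hleaf
  · obtain ⟨c₁, c₀, rfl, hc₁, hc₀⟩ := hc.exists_add_children hρ hlt
    obtain ⟨a₁, ha₁v, ha₁⟩ := (ih hlt).1 c₁ hc₁
    obtain ⟨a₀, ha₀v, ha₀⟩ := (ih hlt).2 c₀ hc₀
    let a : V → M := fun l => if v ++ [true] <+: l then a₁ l else a₀ l
    have hsum₁ : ∀ w, v ++ [true] <+: w → leafSum n a w = leafSum n a₁ w :=
      fun w hw => leafSum_congr fun l hl => if_pos (hw.trans hl.2)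
    have hsum₀ : ∀ w, v ++ [false] <+: w → leafSum n a w = leafSum n a₀ w :=
      fun w hw => leafSum_congr fun l hl =>
        if_neg fun h => Bool.noConfusion (eq_of_append_singleton_prefix h (hw.trans hl.2))
    have hav : leafSum n a v = c₁ + c₀ := by
      rw [leafSum_eq_add a hlt, hsum₁ _ (List.prefix_refl _), hsum₀ _ (List.prefix_refl _),
        ha₁v, ha₀v]
    refine ⟨a, hav, fun x hxX hvx => ?_⟩
    by_cases hxv : x = v
    · subst hxv
      rw [hav, hρv hxX]
    obtain ⟨b, hb⟩ := exists_append_singleton_prefix hvx hxv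
    cases b
    · rw [hsum₀ x hb, ha₀ x hxX hb]
    · rw [hsum₁ x hb, ha₁ x hxX hb]
  · refine ⟨fun _ => c, leafSum_of_length_eq _ hleaf, fun x hxX hvx => ?_⟩
    obtain rfl : v = x := hvx.eq_of_length_le (hleaf ▸ hX hxX)
    rw [leafSum_of_length_eq _ hleaf, hρv hxX]

theorem stmt_4_general (n p : ℕ) (X : Set V) (hX : X ⊆ treeSet n)
    (ρ : V → ZMod p) :
    Consistent n p X ρ ↔
      ∀ x ∈ X, ∀ F : Set V, F ⊆ X → MinEncloses n F x → ρ x = ∑ᶠ y ∈ F, ρ y := by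
  constructor
  · rintro ⟨σ, hσ, hσρ⟩ x hx F hFX hF
    rw [← hσρ x hx, hσ.eq_finsum_of_minEncloses (tripleClosed_cl n X) x (hX hx) F
      (hFX.trans (subset_cl n X)) hF]
    exact finsum_mem_congr rfl fun f hf => hσρ f (hFX hf)
  · intro hρ
    obtain ⟨c, hc⟩ := exists_isEnclosureSum hρ (v := []) (Nat.zero_le n)
    obtain ⟨a, -, ha⟩ := exists_leafSum_eq hX hρ [] (Nat.zero_le n) c hc
    exact ⟨leafSum n a, consistentOn_leafSum (cl_subset_treeSet hX) a,
      fun x hx => ha x hx List.nil_prefix⟩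

/-- for an arbitrary set `X`, `ρ : X → Z/pZ` is consistent
(i.e. extends to a consistent function on `cl(X)`) if and only if for every
`x ∈ X` and every `F ⊆ X` minimally enclosing `x`, `ρ(x) = Σ_{y ∈ F} ρ(y)`. -/
theorem stmt_4 (n p : ℕ) (hp : p.Prime) (X : Set V) (hX : X ⊆ treeSet n)
    (ρ : V → ZMod p) :
    Consistent n p X ρ ↔
      ∀ x ∈ X, ∀ F : Set V, F ⊆ X → MinEncloses n F x → ρ x = ∑ᶠ y ∈ F, ρ y :=
  stmt_4_general n p X hX ρ
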